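/- arXiv:2512.10087 — 6 statements merged into one kernel-verified Lean document; each statement's English description precedes it below -/
import Mathlib

section
/- The Lobachevsky function is π-periodic: for every real θ, Λ(θ + π) = Λ(θ). -/
open MeasureTheory Real

/-- The Lobachevsky function `Λ(θ) = -∫₀^θ log |2 sin t| dt`. -/
noncomputable def lobachevsky (θ : ℝ) : ℝ :=
  -∫ t in (0:ℝ)..θ, Real.log |2 * Real.sin t|

/-!
The integrand `log |2 sin t|` is π-periodic and locally integrable (it is the log of the norm of
an analytic function), so `Λ(θ + π) - Λ(θ)` is minus its integral over one period. Away from the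
zeros of `sin` it equals `log 2 + log (sin t)`, and `∫₀^π log (sin t) dt = -π log 2`, so that
integral vanishes.
-/

theorem periodic_log_abs_two_mul_sin : Function.Periodic (fun t => log |2 * sin t|) π := by
  intro t
  simp only [sin_add_pi, mul_neg, abs_neg]

theorem intervalIntegrable_log_abs_two_mul_sin (a b : ℝ) :
    IntervalIntegrable (fun t => log |2 * sin t|) volume a b :=
  (analyticOnNhd_const.mul analyticOnNhd_sin).meromorphicOn.intervalIntegrable_log_norm

theorem integral_log_abs_two_mul_sin_zero_pi : ∫ t in (0:ℝ)..π, log |2 * sin t| = 0 := by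
  have sin_ne_zero : sin ⁻¹' {0}ᶜ ∈ Filter.codiscrete ℝ :=
    analyticOnNhd_sin.preimage_zero_mem_codiscrete (x := π / 2) (by simp)
  calc ∫ t in (0:ℝ)..π, log |2 * sin t|
      = ∫ t in (0:ℝ)..π, (log 2 + log (sin t)) := by
        refine intervalIntegral.integral_congr_codiscreteWithin
          (Filter.codiscreteWithin_mono (Set.subset_univ _) ?_)
        filter_upwards [sin_ne_zero] with t ht
        rw [log_abs, log_mul two_ne_zero ht]
    _ = π * log 2 + -log 2 * π := by
        rw [intervalIntegral.integral_add (g := fun t => log (sin t)) intervalIntegrable_const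
            intervalIntegrable_log_sin,
          intervalIntegral.integral_const, integral_log_sin_zero_pi, sub_zero, smul_eq_mul]
    _ = 0 := by ring

/-- The Lobachevsky function is π-periodic. -/
theorem lobachevsky_add_pi (θ : ℝ) : lobachevsky (θ + Real.pi) = lobachevsky θ := by
  rw [lobachevsky, lobachevsky,
    periodic_log_abs_two_mul_sin.intervalIntegral_add_eq_add 0 θ
      intervalIntegrable_log_abs_two_mul_sin,
    zero_add, integral_log_abs_two_mul_sin_zero_pi, add_zero]
end

section
/- The Lobachevsky function Λ is continuous on all of ℝ. -/
open MeasureTheory Real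

/-- The Lobachevsky function is continuous on all of ℝ. -/
theorem lobachevsky_continuous : Continuous lobachevsky :=
  (intervalIntegral.continuous_primitive intervalIntegrable_log_abs_two_mul_sin 0).neg
end

section
/- The Lobachevsky function is strictly positive on (0, π/2): for every θ with 0 < θ < π/2, Λ(θ) > 0. -/
/-!
The integrand `log |2 sin t|` is negative on `(0, π/6)` and positive on `(π/6, π/2)`, and its
integral over `[0, π/2]` vanishes because `∫₀^{π/2} log (sin t) dt = -(π/2) log 2`. Hence the
partial integrals `∫₀^θ` are negative for `0 < θ < π/2`: for `θ ≤ π/6` the integrand is negative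
on the whole range, and for `θ > π/6` the integral equals `-∫_θ^{π/2}` of a positive function.
-/

open MeasureTheory Real

theorem intervalIntegral_neg_of_neg_of_pos {f : ℝ → ℝ} {a b c θ : ℝ}
    (hf : IntervalIntegrable f volume a b) (hf_zero : ∫ x in a..b, f x = 0)
    (hneg : ∀ x ∈ Set.Ioo a c, f x < 0) (hpos : ∀ x ∈ Set.Ioo c b, 0 < f x)
    (haθ : a < θ) (hθb : θ < b) :
    ∫ x in a..θ, f x < 0 := by
  have hf_left : IntervalIntegrable f volume a θ :=
    hf.mono_set (Set.uIcc_subset_uIcc_left (Set.mem_uIcc_of_le haθ.le hθb.le))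
  rcases le_or_gt θ c with hθc | hcθ
  · have hpos_neg : 0 < ∫ x in a..θ, -f x :=
      intervalIntegral.intervalIntegral_pos_of_pos_on hf_left.neg
        (fun x hx => neg_pos.2 (hneg x ⟨hx.1, hx.2.trans_le hθc⟩)) haθ
    rw [intervalIntegral.integral_neg] at hpos_neg
    linarith
  · have hf_right : IntervalIntegrable f volume θ b :=
      hf.mono_set (Set.uIcc_subset_uIcc_right (Set.mem_uIcc_of_le haθ.le hθb.le))
    have hpos_right : 0 < ∫ x in θ..b, f x :=
      intervalIntegral.intervalIntegral_pos_of_pos_on hf_right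
        (fun x hx => hpos x ⟨hcθ.trans hx.1, hx.2⟩) hθb
    have hsplit := intervalIntegral.integral_add_adjacent_intervals hf_left hf_right
    linarith

theorem integral_log_abs_two_mul_sin_zero_pi_div_two :
    ∫ t in (0 : ℝ)..(π / 2), log |2 * sin t| = 0 := by
  have hsplit : ∫ t in (0 : ℝ)..(π / 2), log |2 * sin t|
      = ∫ t in (0 : ℝ)..(π / 2), (log 2 + log (sin t)) := by
    refine intervalIntegral.integral_congr_ae (ae_of_all _ fun t ht => ?_)
    rw [Set.uIoc_of_le (by positivity)] at ht
    have hsin : 0 < sin t := sin_pos_of_pos_of_lt_pi ht.1 (by linarith [ht.2, pi_pos])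
    rw [abs_of_pos (by positivity), log_mul two_ne_zero hsin.ne']
  have hlog_sin : IntervalIntegrable (fun t => log (sin t)) volume 0 (π / 2) :=
    intervalIntegrable_log_sin
  rw [hsplit, intervalIntegral.integral_add intervalIntegrable_const hlog_sin,
    intervalIntegral.integral_const, integral_log_sin_zero_pi_div_two, smul_eq_mul]
  ring

theorem log_abs_two_mul_sin_neg {t : ℝ} (ht : t ∈ Set.Ioo 0 (π / 6)) :
    log |2 * sin t| < 0 := by
  obtain ⟨ht0, ht6⟩ := ht
  have hsin_pos : 0 < sin t := sin_pos_of_pos_of_lt_pi ht0 (by linarith [pi_pos])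
  have hsin_lt : sin t < 1 / 2 := by
    rw [← sin_pi_div_six]
    exact sin_lt_sin_of_lt_of_le_pi_div_two (by linarith) (by linarith [pi_pos]) ht6
  rw [abs_of_pos (by positivity)]
  exact log_neg (by positivity) (by linarith)

theorem log_abs_two_mul_sin_pos {t : ℝ} (ht : t ∈ Set.Ioo (π / 6) (5 * π / 6)) :
    0 < log |2 * sin t| := by
  obtain ⟨ht6, ht56⟩ := ht
  have hsin_gt : 1 / 2 < sin t := by
    rw [← sin_pi_div_six]
    rcases le_or_gt t (π / 2) with ht2 | ht2
    · exact sin_lt_sin_of_lt_of_le_pi_div_two (by linarith [pi_pos]) ht2 ht6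
    · rw [← sin_pi_sub t]
      exact sin_lt_sin_of_lt_of_le_pi_div_two (by linarith [pi_pos]) (by linarith) (by linarith)
  rw [abs_of_pos (by linarith)]
  exact log_pos (by linarith)

/-- Λ is strictly positive on (0, π/2). -/
theorem lobachevsky_pos {θ : ℝ} (h0 : 0 < θ) (h1 : θ < Real.pi / 2) :
    0 < lobachevsky θ := by
  have hneg : ∫ t in (0 : ℝ)..θ, log |2 * sin t| < 0 :=
    intervalIntegral_neg_of_neg_of_pos (intervalIntegrable_log_abs_two_mul_sin 0 (π / 2))
      integral_log_abs_two_mul_sin_zero_pi_div_two (fun _ => log_abs_two_mul_sin_neg)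
      (fun t ht => log_abs_two_mul_sin_pos ⟨ht.1, ht.2.trans (by linarith [pi_pos])⟩) h0 h1
  rw [lobachevsky]
  linarith
end

section
/- The Lobachevsky function has the uniformly convergent Fourier series representation: for every real θ, Λ(θ) = (1/2) ∑_{n=1}^∞ sin(2nθ)/n², where the series converges (in the sense of summability of the sequence of partial sums). -/
open MeasureTheory Real

/-!
Differentiating term by term, the claim amounts to `∑ cos (2nt) / n = -log |2 sin t|`, the real
part of `∑ zⁿ / n = -log (1 - z)` at `z = e^{2it}`. On the unit circle this series converges for
`z ≠ 1` by Dirichlet's test, and Abel's limit theorem identifies its sum. Abel summation also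
bounds the partial sums by `3 - log |sin t|`, which is integrable, so dominated convergence lets
us integrate the cosine series term by term from `0` to `θ`.
-/

open Filter Finset Topology

theorem norm_sum_Ico_smul_le_of_antitoneOn {E : Type*} [NormedAddCommGroup E] [NormedSpace ℝ E]
    {f : ℕ → ℝ} {z : ℕ → E} {b : ℝ} {m : ℕ}
    (hf : AntitoneOn f (Set.Ici m)) (hf0 : ∀ i, 0 ≤ f i)
    (hzb : ∀ k, ‖∑ i ∈ range k, z i‖ ≤ b) (n : ℕ) :
    ‖∑ i ∈ Ico m n, f i • z i‖ ≤ 2 * b * f m := by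
  have hb : 0 ≤ b := (norm_nonneg _).trans (hzb 0)
  rcases le_or_gt n m with hnm | hmn
  · rw [Ico_eq_empty_of_le hnm, sum_empty, norm_zero]
    exact mul_nonneg (mul_nonneg zero_le_two hb) (hf0 m)
  have hstep : ∀ i ∈ Ico m (n - 1), f (i + 1) ≤ f i := fun i hi =>
    hf (Set.mem_Ici.2 (mem_Ico.1 hi).1) (Set.mem_Ici.2 ((mem_Ico.1 hi).1.trans i.le_succ))
      i.le_succ
  have hdiff : ‖∑ i ∈ Ico m (n - 1), (f (i + 1) - f i) • ∑ j ∈ range (i + 1), z j‖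
      ≤ (f m - f (n - 1)) * b := by
    calc _ ≤ ∑ i ∈ Ico m (n - 1), (f i - f (i + 1)) * b := by
          refine (norm_sum_le _ _).trans (sum_le_sum fun i hi => ?_)
          rw [norm_smul, Real.norm_eq_abs, abs_sub_comm,
            abs_of_nonneg (sub_nonneg.2 (hstep i hi))]
          exact mul_le_mul_of_nonneg_left (hzb _) (sub_nonneg.2 (hstep i hi))
      _ = (f m - f (n - 1)) * b := by
          have htel := sum_Ico_sub f (by omega : m ≤ n - 1)
          rw [sum_sub_distrib] at htel
          rw [← sum_mul, sum_sub_distrib]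
          congr 1
          linarith
  rw [sum_Ico_by_parts f z hmn]
  calc _ ≤ f (n - 1) * b + f m * b + (f m - f (n - 1)) * b := by
        refine norm_sub_le_of_le (norm_sub_le_of_le ?_ ?_) hdiff <;>
          rw [norm_smul, Real.norm_of_nonneg (hf0 _)] <;>
          exact mul_le_mul_of_nonneg_left (hzb _) (hf0 _)
    _ = 2 * b * f m := by ring

theorem norm_geom_sum_le {K : Type*} [NormedDivisionRing K] {w : K} (hw : ‖w‖ ≤ 1)
    (hw1 : w ≠ 1) (n : ℕ) : ‖∑ i ∈ range n, w ^ i‖ ≤ 2 / ‖1 - w‖ := by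
  rw [geom_sum_eq hw1, norm_div, norm_sub_rev w]
  gcongr
  calc ‖w ^ n - 1‖ ≤ ‖w ^ n‖ + ‖(1 : K)‖ := norm_sub_le _ _
    _ ≤ 2 := by
      rw [norm_pow, norm_one]
      linarith [pow_le_one₀ (norm_nonneg w) hw (n := n)]

theorem harmonic_eq_sum_range_succ_inv (M : ℕ) :
    (harmonic M : ℝ) = ∑ i ∈ range (M + 1), (i : ℝ)⁻¹ := by
  rw [sum_range_succ', harmonic]
  push_cast
  simp

namespace Complex

theorem norm_sum_Ico_pow_div_le {w : ℂ} (hw : ‖w‖ ≤ 1) (hw1 : w ≠ 1) {m : ℕ}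
    (hm : 1 ≤ m) (n : ℕ) : ‖∑ i ∈ Ico m n, w ^ i / i‖ ≤ 4 / (m * ‖1 - w‖) := by
  have hanti : AntitoneOn (fun i : ℕ => (i : ℝ)⁻¹) (Set.Ici m) := fun i hi j _ hij =>
    inv_anti₀ (by exact_mod_cast hm.trans hi) (by exact_mod_cast hij)
  have := norm_sum_Ico_smul_le_of_antitoneOn hanti (fun i => by positivity)
    (norm_geom_sum_le hw hw1) n
  simp only [real_smul, ofReal_inv, ofReal_natCast, ← div_eq_inv_mul] at this
  refine this.trans (le_of_eq ?_)
  field_simp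
  ring

theorem one_sub_mem_slitPlane {w : ℂ} (hw : ‖w‖ ≤ 1) (hw1 : w ≠ 1) :
    1 - w ∈ slitPlane := by
  rcases eq_or_ne w.im 0 with him | him
  · have hre : w.re ≠ 1 := fun h => hw1 (ext (by simp [h]) (by simp [him]))
    refine mem_slitPlane_iff.2 (Or.inl ?_)
    rw [sub_re, one_re, sub_pos]
    exact lt_of_le_of_ne ((re_le_norm w).trans hw) hre
  · exact mem_slitPlane_iff.2 (Or.inr (by simpa using him))

theorem norm_sum_range_pow_div_le {w : ℂ} (hw : ‖w‖ ≤ 1) (hw1 : w ≠ 1) (M N : ℕ) :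
    ‖∑ i ∈ range N, w ^ i / i‖ ≤ harmonic M + 4 / ((M + 1) * ‖1 - w‖) := by
  have htail_nonneg : 0 ≤ 4 / (((M : ℝ) + 1) * ‖1 - w‖) := by positivity
  have hhead : ∀ K ≤ M + 1, ‖∑ i ∈ range K, w ^ i / i‖ ≤ harmonic M := by
    intro K hK
    calc _ ≤ ∑ i ∈ range K, (i : ℝ)⁻¹ := by
          refine norm_sum_le_of_le _ fun i _ => ?_
          rw [norm_div, norm_pow, norm_natCast, div_eq_mul_inv]
          exact mul_le_of_le_one_left (by positivity) (pow_le_one₀ (norm_nonneg w) hw)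
      _ ≤ ∑ i ∈ range (M + 1), (i : ℝ)⁻¹ :=
          sum_le_sum_of_subset_of_nonneg (range_subset_range.2 hK) fun i _ _ => by positivity
      _ = harmonic M := (harmonic_eq_sum_range_succ_inv M).symm
  rcases le_or_gt N (M + 1) with hN | hN
  · linarith [hhead N hN]
  rw [← sum_range_add_sum_Ico _ hN.le]
  refine (norm_add_le _ _).trans (add_le_add (hhead _ le_rfl) ?_)
  simpa using norm_sum_Ico_pow_div_le hw hw1 (Nat.le_add_left 1 M) N

theorem tendsto_sum_range_pow_div {w : ℂ} (hw : ‖w‖ ≤ 1) (hw1 : w ≠ 1) :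
    Tendsto (fun N => ∑ i ∈ range N, w ^ i / i) atTop (𝓝 (-log (1 - w))) := by
  have hcauchy : CauchySeq fun N => ∑ i ∈ range N, w ^ i / i := by
    rw [Metric.cauchySeq_iff']
    intro ε hε
    have hw0 : 0 < ‖1 - w‖ := norm_pos_iff.2 (sub_ne_zero.2 hw1.symm)
    obtain ⟨m, hm⟩ := exists_nat_gt (4 / (ε * ‖1 - w‖))
    refine ⟨m + 1, fun n hn => ?_⟩
    rw [dist_eq_norm, ← sum_Ico_eq_sub _ hn]
    refine (norm_sum_Ico_pow_div_le hw hw1 (Nat.le_add_left 1 m) n).trans_lt ?_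
    rw [div_lt_iff₀ (by positivity)]
    rw [div_lt_iff₀ (by positivity)] at hm
    push_cast
    nlinarith
  obtain ⟨L, hL⟩ := cauchySeq_tendsto_of_complete hcauchy
  suffices L = -log (1 - w) from this ▸ hL
  have hlog : Tendsto (fun x : ℂ => ∑' n : ℕ, w ^ n / n * x ^ n) ((𝓝[<] 1).map ofReal)
      (𝓝 (-log (1 - w))) := by
    rw [tendsto_map'_iff]
    have hcont : Tendsto (fun x : ℝ => -log (1 - x * w)) (𝓝[<] 1) (𝓝 (-log (1 - w))) := by
      have h : ContinuousAt (fun x : ℝ => -log (1 - x * w)) 1 :=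
        ((continuousAt_clog (one_sub_mem_slitPlane hw hw1)).comp_of_eq (by fun_prop) (by simp)).neg
      simpa using h.tendsto.mono_left nhdsWithin_le_nhds
    refine hcont.congr' ?_
    filter_upwards [Ioo_mem_nhdsLT one_pos] with x hx
    have hxw : ‖(x : ℂ) * w‖ < 1 := by
      rw [norm_mul, norm_real, Real.norm_of_nonneg hx.1.le]
      exact (mul_le_of_le_one_right hx.1.le hw).trans_lt hx.2
    rw [← (hasSum_taylorSeries_neg_log hxw).tsum_eq]
    exact tsum_congr fun n => by rw [mul_pow]; ring
  exact tendsto_nhds_unique (tendsto_tsum_powerSeries_nhdsWithin_lt hL) hlog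

end Complex

/-- The `n = 0` term is `cos 0 / 0 = 0`. -/
noncomputable def cosPartialSum (N : ℕ) (t : ℝ) : ℝ := ∑ n ∈ range N, cos (2 * n * t) / n

theorem continuous_cosPartialSum (N : ℕ) : Continuous (cosPartialSum N) := by
  unfold cosPartialSum
  fun_prop

theorem cosPartialSum_eq_re (N : ℕ) (t : ℝ) :
    cosPartialSum N t = (∑ n ∈ range N, Complex.exp (Complex.I * ↑(2 * t)) ^ n / n).re := by
  rw [cosPartialSum, Complex.re_sum]
  refine sum_congr rfl fun n _ => ?_
  rw [Complex.div_natCast_re, ← Complex.exp_nat_mul,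
    show (n : ℂ) * (Complex.I * ↑(2 * t)) = ↑(2 * n * t) * Complex.I by push_cast; ring,
    Complex.exp_ofReal_mul_I_re]

theorem norm_one_sub_exp_I_mul_two_mul (t : ℝ) :
    ‖1 - Complex.exp (Complex.I * ↑(2 * t))‖ = |2 * sin t| := by
  rw [norm_sub_rev, Complex.norm_exp_I_mul_ofReal_sub_one, Real.norm_eq_abs,
    mul_div_cancel_left₀ t two_ne_zero]

theorem exp_I_mul_two_mul_ne_one {t : ℝ} (ht : sin t ≠ 0) :
    Complex.exp (Complex.I * ↑(2 * t)) ≠ 1 := by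
  intro h
  have := norm_one_sub_exp_I_mul_two_mul t
  rw [h, sub_self, norm_zero] at this
  exact ht (by simpa using this.symm)

theorem tendsto_cosPartialSum {t : ℝ} (ht : sin t ≠ 0) :
    Tendsto (cosPartialSum · t) atTop (𝓝 (-log |2 * sin t|)) := by
  have hre := (Complex.continuous_re.tendsto _).comp (Complex.tendsto_sum_range_pow_div
    (Complex.norm_exp_I_mul_ofReal _).le (exp_I_mul_two_mul_ne_one ht))
  rw [Complex.neg_re, Complex.log_re, norm_one_sub_exp_I_mul_two_mul] at hre
  exact hre.congr fun N => (cosPartialSum_eq_re N t).symm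

theorem abs_cosPartialSum_le {t : ℝ} (ht : sin t ≠ 0) (N : ℕ) :
    |cosPartialSum N t| ≤ 3 - log |sin t| := by
  set s := |sin t|
  have hs : 0 < s := abs_pos.2 ht
  -- Splitting the sum at `M ≈ 1 / s`, the head is at most a harmonic sum and the tail is `O(1)`.
  set M := ⌊s⁻¹⌋₊
  have hM : 1 < (M + 1) * s := by
    have := Nat.lt_floor_add_one s⁻¹
    rwa [inv_lt_iff_one_lt_mul₀ hs] at this
  have hharmonic : (harmonic M : ℝ) ≤ 1 - log s := by
    have hM1 : 1 ≤ M := Nat.le_floor (by simpa using one_le_inv₀ hs |>.2 (abs_sin_le_one t))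
    have := harmonic_le_one_add_log M
    have := log_le_log (by positivity) (Nat.floor_le (inv_nonneg.2 hs.le))
    rw [log_inv] at this
    linarith
  have htail : 4 / ((M + 1) * ‖1 - Complex.exp (Complex.I * ↑(2 * t))‖) ≤ 2 := by
    rw [norm_one_sub_exp_I_mul_two_mul, abs_mul, abs_two, div_le_iff₀ (by positivity)]
    nlinarith
  rw [cosPartialSum_eq_re]
  calc _ ≤ ‖∑ n ∈ range N, Complex.exp (Complex.I * ↑(2 * t)) ^ n / n‖ :=
        Complex.abs_re_le_norm _
    _ ≤ _ := Complex.norm_sum_range_pow_div_le (Complex.norm_exp_I_mul_ofReal _).le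
        (exp_I_mul_two_mul_ne_one ht) M N
    _ ≤ 3 - log s := by linarith

theorem integral_cos_two_mul_div (n : ℕ) (θ : ℝ) :
    ∫ t in 0..θ, cos (2 * n * t) / n = sin (2 * n * θ) / (2 * n ^ 2) := by
  rcases eq_or_ne n 0 with rfl | hn
  · simp
  have h2n : (2 * n : ℝ) ≠ 0 := by positivity
  rw [intervalIntegral.integral_div, intervalIntegral.integral_comp_mul_left (fun x => cos x) h2n,
    integral_cos, mul_zero, sin_zero, sub_zero, smul_eq_mul]
  field_simp

theorem integral_cosPartialSum (N : ℕ) (θ : ℝ) :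
    ∫ t in 0..θ, cosPartialSum N t = ∑ n ∈ range N, sin (2 * n * θ) / (2 * n ^ 2) := by
  unfold cosPartialSum
  rw [intervalIntegral.integral_finsetSum fun n _ => by
    exact (by fun_prop : Continuous fun t : ℝ => cos (2 * n * t) / n).intervalIntegrable _ _]
  exact sum_congr rfl fun n _ => integral_cos_two_mul_div n θ

theorem ae_sin_ne_zero : ∀ᵐ t : ℝ, sin t ≠ 0 := by
  rw [ae_iff]
  exact measure_mono_null (fun t ht => sin_eq_zero_iff.1 (not_not.1 ht))
    ((Set.countable_range fun k : ℤ => k * π).measure_zero volume)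

theorem tendsto_integral_cosPartialSum (θ : ℝ) :
    Tendsto (fun N => ∫ t in 0..θ, cosPartialSum N t) atTop (𝓝 (lobachevsky θ)) := by
  rw [lobachevsky, ← intervalIntegral.integral_neg]
  refine intervalIntegral.tendsto_integral_filter_of_dominated_convergence
    (fun t => 3 - log |sin t|)
    (.of_forall fun N => (continuous_cosPartialSum N).aestronglyMeasurable)
    (.of_forall fun N => ?_) ?_ ?_
  · filter_upwards [ae_sin_ne_zero] with t ht _ using abs_cosPartialSum_le ht N
  · simpa [Function.comp_def, log_abs] using
      intervalIntegrable_const.sub intervalIntegrable_log_sin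
  · filter_upwards [ae_sin_ne_zero] with t ht _ using tendsto_cosPartialSum ht

/-- Fourier series of the Lobachevsky function: the partial sums of
(1/2) ∑_{n=1}^∞ sin(2nθ)/n² converge to Λ(θ) for every real θ. -/
theorem lobachevsky_fourier_series (θ : ℝ) :
    Filter.Tendsto
      (fun N : ℕ => (1 / 2) * ∑ n ∈ Finset.Icc 1 N, Real.sin (2 * n * θ) / (n : ℝ) ^ 2)
      Filter.atTop (nhds (lobachevsky θ)) := by
  refine ((tendsto_add_atTop_iff_nat 1).2 (tendsto_integral_cosPartialSum θ)).congr fun N => ?_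
  rw [integral_cosPartialSum, sum_range_eq_add_Ico _ N.add_one_pos, Ico_add_one_right_eq_Icc,
    mul_sum]
  simp only [CharP.cast_eq_zero, mul_zero, zero_mul, sin_zero, zero_div, zero_add]
  exact sum_congr rfl fun n _ => by ring
end

section
/- The Lobachevsky function satisfies the duplication formula: for every real θ, Λ(2θ) = 2Λ(θ) + 2Λ(θ + π/2). -/
/-!
Since `2 sin 2t = (2 sin t) (2 sin (t + π/2))`, the integrand satisfies
`log |2 sin 2t| = log |2 sin t| + log |2 sin (t + π/2)|` away from the countably many zeros of
`sin 2t`. Integrating over `[0, θ]` and substituting `t ↦ 2t` gives the formula up to the constant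
`Λ(π/2)`, which vanishes by Euler's `∫₀^{π/2} log sin t dt = -(π/2) log 2`.
-/

open MeasureTheory Real

theorem ae_sin_const_mul_ne_zero {c : ℝ} (hc : c ≠ 0) : ∀ᵐ x : ℝ, sin (c * x) ≠ 0 := by
  refine measure_mono_null (fun x hx => ?_)
    ((Set.countable_range fun k : ℤ => k * π / c).measure_zero _)
  obtain ⟨k, hk⟩ := sin_eq_zero_iff.mp (not_not.mp hx)
  exact ⟨k, by field_simp; linarith⟩

theorem log_abs_two_mul_sin_two_mul {x : ℝ} (hx : sin (2 * x) ≠ 0) :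
    log |2 * sin (2 * x)| = log |2 * sin x| + log |2 * sin (x + π / 2)| := by
  rw [sin_two_mul, mul_ne_zero_iff, mul_ne_zero_iff] at hx
  rw [sin_add_pi_div_two, ← log_mul (by simp [hx]) (by simp [hx]), ← abs_mul, sin_two_mul]
  ring_nf

theorem integral_log_abs_two_mul_sin_two_mul (θ : ℝ) :
    ∫ t in (0:ℝ)..2 * θ, log |2 * sin t| =
      2 * ((∫ t in (0:ℝ)..θ, log |2 * sin t|) + ∫ t in π / 2..θ + π / 2, log |2 * sin t|) := by
  have hshifted : IntervalIntegrable (fun x => log |2 * sin (x + π / 2)|) volume 0 θ := by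
    simpa using
      (intervalIntegrable_log_abs_two_mul_sin (π / 2) (θ + π / 2)).comp_add_right (π / 2)
  calc ∫ t in (0:ℝ)..2 * θ, log |2 * sin t|
      = 2 * ∫ x in (0:ℝ)..θ, log |2 * sin (2 * x)| := by
        rw [intervalIntegral.integral_comp_mul_left (fun t => log |2 * sin t|) two_ne_zero,
          smul_eq_mul, mul_zero, mul_inv_cancel_left₀ two_ne_zero]
    _ = 2 * ∫ x in (0:ℝ)..θ, (log |2 * sin x| + log |2 * sin (x + π / 2)|) := by
        congr 1
        refine intervalIntegral.integral_congr_ae ?_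
        filter_upwards [ae_sin_const_mul_ne_zero two_ne_zero] with x hx _
        exact log_abs_two_mul_sin_two_mul hx
    _ = _ := by
        rw [intervalIntegral.integral_add (intervalIntegrable_log_abs_two_mul_sin 0 θ) hshifted,
          intervalIntegral.integral_comp_add_right (fun t => log |2 * sin t|), zero_add]

theorem lobachevsky_sub_lobachevsky (a b : ℝ) :
    lobachevsky b - lobachevsky a = -∫ t in a..b, log |2 * sin t| := by
  rw [lobachevsky, lobachevsky, ← intervalIntegral.integral_interval_sub_left
    (intervalIntegrable_log_abs_two_mul_sin 0 b) (intervalIntegrable_log_abs_two_mul_sin 0 a)]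
  ring

theorem lobachevsky_pi_div_two : lobachevsky (π / 2) = 0 := by
  have hsplit : ∫ t in (0:ℝ)..π / 2, log |2 * sin t| =
      ∫ t in (0:ℝ)..π / 2, (log 2 + log (sin t)) := by
    refine intervalIntegral.integral_congr_ae (Filter.Eventually.of_forall fun t ht => ?_)
    rw [Set.uIoc_of_le (by positivity)] at ht
    have hsin : 0 < sin t := sin_pos_of_pos_of_lt_pi ht.1 (by linarith [ht.2, pi_pos])
    rw [abs_of_pos (by positivity), log_mul two_ne_zero hsin.ne']
  have hlog_sin : IntervalIntegrable (fun t => log (sin t)) volume 0 (π / 2) :=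
    intervalIntegrable_log_sin
  rw [lobachevsky, hsplit, intervalIntegral.integral_add intervalIntegrable_const hlog_sin,
    integral_log_sin_zero_pi_div_two, intervalIntegral.integral_const, smul_eq_mul]
  ring

/-- The duplication formula Λ(2θ) = 2Λ(θ) + 2Λ(θ + π/2). -/
theorem lobachevsky_two_mul (θ : ℝ) :
    lobachevsky (2 * θ) = 2 * lobachevsky θ + 2 * lobachevsky (θ + Real.pi / 2) := by
  have hshift := lobachevsky_sub_lobachevsky (π / 2) (θ + π / 2)
  rw [lobachevsky_pi_div_two, sub_zero] at hshift
  rw [lobachevsky, integral_log_abs_two_mul_sin_two_mul, lobachevsky, hshift]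
  ring
end

section
/- The value of the Lobachevsky function at π/4 is half of Catalan's constant: Λ(π/4) = (1/2) ∑_{n=0}^∞ (-1)^n/(2n+1)². -/
/-!
Put `A = ∫₀^{π/4} log (2 sin t) dt` and `B = ∫₀^{π/4} log (2 cos t) dt`, so that `Λ(π/4) = -A`.
Reflecting `t ↦ π/2 - t` turns `B` into the integral of `log (2 sin t)` over `[π/4, π/2]`, hence
`A + B = ∫₀^{π/2} log (2 sin t) dt = 0` by Euler's evaluation of `∫₀^{π/2} log (sin t) dt`.
On the other hand `B - A = -∫₀^{π/4} log (tan t) dt = -∫₀^1 log x / (1 + x²) dx` (substitute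
`x = tan t`), and expanding `1 / (1 + x²)` as a geometric series and using
`∫₀^1 x^{2n} log x dx = -1/(2n+1)²` gives `B - A = ∑ (-1)ⁿ/(2n+1)²`. The termwise integration
is legitimate because the integrals of `|x^{2n} log x|` are `1/(2n+1)²`, a summable sequence.
-/

open MeasureTheory Real

open Set intervalIntegral

theorem lobachevsky_eq_neg_integral_log_two_mul_sin (θ : ℝ) :
    lobachevsky θ = -∫ t in (0:ℝ)..θ, log (2 * sin t) := by
  simp only [lobachevsky, log_abs]

theorem intervalIntegrable_log_two_mul_sin (a b : ℝ) :
    IntervalIntegrable (fun t => log (2 * sin t)) volume a b :=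
  (analyticOnNhd_const.mul analyticOnNhd_sin).meromorphicOn.intervalIntegrable_log

theorem intervalIntegrable_log_two_mul_cos (a b : ℝ) :
    IntervalIntegrable (fun t => log (2 * cos t)) volume a b :=
  (analyticOnNhd_const.mul analyticOnNhd_cos).meromorphicOn.intervalIntegrable_log

theorem integral_log_two_mul_sin_zero_pi_div_two :
    ∫ t in (0:ℝ)..π / 2, log (2 * sin t) = 0 := by
  have h : ∫ t in (0:ℝ)..π / 2, log (2 * sin t) =
      ∫ t in (0:ℝ)..π / 2, (log 2 + log (sin t)) := by
    refine integral_congr_ae (.of_forall fun t ht => ?_)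
    rw [uIoc_of_le (by positivity)] at ht
    exact log_mul two_ne_zero (sin_pos_of_pos_of_lt_pi ht.1 (by linarith [pi_pos, ht.2])).ne'
  rw [h, integral_add (g := fun t => log (sin t)) intervalIntegrable_const
    intervalIntegrable_log_sin, intervalIntegral.integral_const,
    integral_log_sin_zero_pi_div_two, smul_eq_mul]
  ring

theorem integral_log_two_mul_cos_eq (a : ℝ) :
    ∫ t in (0:ℝ)..a, log (2 * cos t) = ∫ t in (π / 2 - a)..π / 2, log (2 * sin t) := by
  simpa [sin_pi_div_two_sub] using
    integral_comp_sub_left (fun t => log (2 * sin t)) (π / 2) (a := 0) (b := a)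

theorem integral_log_two_mul_sin_add_integral_log_two_mul_cos :
    (∫ t in (0:ℝ)..π / 4, log (2 * sin t)) + ∫ t in (0:ℝ)..π / 4, log (2 * cos t) = 0 := by
  rw [integral_log_two_mul_cos_eq, show π / 2 - π / 4 = π / 4 by ring,
    integral_add_adjacent_intervals (intervalIntegrable_log_two_mul_sin _ _)
      (intervalIntegrable_log_two_mul_sin _ _),
    integral_log_two_mul_sin_zero_pi_div_two]

theorem integral_log_two_mul_cos_sub_integral_log_two_mul_sin :
    (∫ t in (0:ℝ)..π / 4, log (2 * cos t)) - ∫ t in (0:ℝ)..π / 4, log (2 * sin t) =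
      -∫ t in (0:ℝ)..π / 4, log (tan t) := by
  rw [← integral_sub (intervalIntegrable_log_two_mul_cos _ _)
    (intervalIntegrable_log_two_mul_sin _ _), ← intervalIntegral.integral_neg]
  refine integral_congr_ae (.of_forall fun t ht => ?_)
  rw [uIoc_of_le (by positivity)] at ht
  have hsin : 0 < sin t := sin_pos_of_pos_of_lt_pi ht.1 (by linarith [pi_pos, ht.2])
  have hcos : 0 < cos t :=
    cos_pos_of_mem_Ioo ⟨by linarith [pi_pos, ht.1], by linarith [pi_pos, ht.2]⟩
  rw [tan_eq_sin_div_cos, ← mul_div_mul_left _ _ two_ne_zero,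
    log_div (by positivity) (by positivity)]
  ring

theorem integral_log_tan_zero_pi_div_four :
    ∫ t in (0:ℝ)..π / 4, log (tan t) = ∫ x in (0:ℝ)..1, log x / (1 + x ^ 2) := by
  have h := integral_Icc_deriv_smul_of_deriv_nonneg (g := fun t => log (tan t))
    continuous_arctan.continuousOn (fun x _ => hasDerivAt_arctan x) (fun x _ => by positivity)
    zero_le_one
  simp only [arctan_zero, arctan_one, tan_arctan, smul_eq_mul] at h
  rw [intervalIntegral.integral_of_le (by positivity), intervalIntegral.integral_of_le zero_le_one,
    ← integral_Icc_eq_integral_Ioc, ← integral_Icc_eq_integral_Ioc, ← h]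
  congr 1 with x
  ring

theorem integral_pow_mul_log_zero_one (k : ℕ) :
    ∫ x in (0:ℝ)..1, x ^ k * log x = -1 / ((k:ℝ) + 1) ^ 2 := by
  have hk : (k:ℝ) + 1 ≠ 0 := by positivity
  -- `x ^ (k + 1) * log x = x ^ k * (x * log x)` extends continuously to `0`
  have hcont : Continuous fun x : ℝ => x ^ (k + 1) * log x :=
    ((continuous_pow k).mul continuous_mul_log).congr fun x => by
      simp only [Pi.mul_apply]; ring
  have hderiv : ∀ x ∈ Ioo (0:ℝ) 1, HasDerivAt
      (fun x => x ^ (k + 1) * log x / (k + 1) - x ^ (k + 1) / (k + 1) ^ 2) (x ^ k * log x) x := by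
    intro x hx
    have hx0 : x ≠ 0 := hx.1.ne'
    refine ((((hasDerivAt_pow (k + 1) x).mul (hasDerivAt_log hx0)).div_const _).sub
      ((hasDerivAt_pow (k + 1) x).div_const _)).congr_deriv ?_
    simp only [Nat.add_sub_cancel, Nat.cast_succ]
    field_simp
    ring
  rw [integral_eq_sub_of_hasDerivAt_of_le zero_le_one (by fun_prop) hderiv
    (intervalIntegrable_log'.continuousOn_mul (by fun_prop))]
  simp [log_one, neg_div]

theorem integral_log_div_one_add_sq_zero_one :
    ∫ x in (0:ℝ)..1, log x / (1 + x ^ 2) = -∑' n : ℕ, (-1 : ℝ) ^ n / (2 * n + 1) ^ 2 := by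
  set F : ℕ → ℝ → ℝ := fun n x => (-1) ^ n * (x ^ (2 * n) * log x)
  have hF_int : ∀ n, Integrable (F n) (volume.restrict (Ioo 0 1)) := fun n =>
    ((intervalIntegrable_iff_integrableOn_Ioo_of_le zero_le_one).1
      (intervalIntegrable_log'.continuousOn_mul (by fun_prop))).const_mul _
  have hF_norm : ∀ n, ∫ x in Ioo (0:ℝ) 1, ‖F n x‖ = 1 / (2 * n + 1) ^ 2 := by
    intro n
    have h : ∀ x ∈ Ioo (0:ℝ) 1, ‖F n x‖ = -(x ^ (2 * n) * log x) := fun x hx => by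
      rw [norm_mul, norm_pow, norm_neg, norm_one, one_pow, one_mul, Real.norm_of_nonpos
        (mul_nonpos_of_nonneg_of_nonpos (pow_nonneg hx.1.le _) (log_nonpos hx.1.le hx.2.le))]
    rw [setIntegral_congr_fun measurableSet_Ioo h, MeasureTheory.integral_neg,
      ← integral_Ioc_eq_integral_Ioo, ← intervalIntegral.integral_of_le zero_le_one,
      integral_pow_mul_log_zero_one]
    push_cast
    ring
  have hF_sum : ∀ x ∈ Ioo (0:ℝ) 1, ∑' n, F n x = log x / (1 + x ^ 2) := by
    intro x hx
    have hx2 : |-x ^ 2| < 1 := by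
      rw [abs_neg, abs_of_nonneg (by positivity)]
      nlinarith [hx.1, hx.2]
    rw [div_eq_mul_inv, mul_comm, ← sub_neg_eq_add, ← tsum_geometric_of_abs_lt_one hx2,
      ← tsum_mul_right]
    congr 1 with n
    rw [neg_pow, ← pow_mul]
    ring
  have hsummable : Summable fun n : ℕ => 1 / (2 * (n:ℝ) + 1) ^ 2 := by
    have := (summable_one_div_nat_pow.2 one_lt_two).comp_injective
      (i := fun n : ℕ => 2 * n + 1) fun a b h => by simpa using h
    simpa [Function.comp_def] using this
  have htermwise := integral_tsum_of_summable_integral_norm hF_int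
    (by simpa only [hF_norm] using hsummable)
  rw [intervalIntegral.integral_of_le zero_le_one, integral_Ioc_eq_integral_Ioo,
    ← setIntegral_congr_fun measurableSet_Ioo hF_sum, ← htermwise, ← tsum_neg]
  congr 1 with n
  rw [← integral_Ioc_eq_integral_Ioo, ← intervalIntegral.integral_of_le zero_le_one]
  simp only [F, intervalIntegral.integral_const_mul, integral_pow_mul_log_zero_one]
  push_cast
  ring

/-- Λ(π/4) equals half of Catalan's constant ∑_{n=0}^∞ (-1)^n/(2n+1)². -/
theorem lobachevsky_pi_div_four :
    lobachevsky (Real.pi / 4) =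
      (1 / 2) * ∑' n : ℕ, (-1 : ℝ) ^ n / (2 * n + 1) ^ 2 := by
  have hsum := integral_log_two_mul_sin_add_integral_log_two_mul_cos
  have hdiff := integral_log_two_mul_cos_sub_integral_log_two_mul_sin
  rw [integral_log_tan_zero_pi_div_four, integral_log_div_one_add_sq_zero_one, neg_neg] at hdiff
  rw [lobachevsky_eq_neg_integral_log_two_mul_sin]
  linarith
end
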